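/- arXiv:1506.00886 — 5 statements merged into one kernel-verified Lean document; each statement's English description precedes it below -/
import Mathlib

section
/- Let ε > 0 and let G be a finite group with |G| ≥ 2 and symmetric generating set S. If λ₁(G,S) ≤ min{2^{-9}, (|S|/|G|)^ε} or h(G,S) ≤ min{2^{-2}, (|S|/|G|)^ε}, then diam_S(G) ≥ (|G|/|S|)^{ε/3}. -/
/-!
If `S ^ n = G`, every `g ∈ G` is a product of at most `n` elements of `S`. Both
`g ↦ ‖f(· g) - f‖₂` and `g ↦ |A \ A g⁻¹|` are subadditive and vanish at `1`, so each is at most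
`n` times its maximum over `S`, which is bounded by the Dirichlet energy of `f`, resp. the edge
boundary of `A`. Averaging over `g ∈ G` (the averages are `2‖f‖²` for mean-zero `f`, and
`|A| |Aᶜ| / |G| ≥ |A| / 2`) gives `λ₁ ≥ 1 / n²` and `h ≥ 1 / (2n)`. Hence `(|G|/|S|)^ε` is at most
`n²`, resp. `2n ≤ n³` (since `h ≤ 1/4` forces `n ≥ 2`).
-/

open Pointwise

/-- The least `n` such that `S^n` is the whole group: the diameter of the Cayley graph. -/
noncomputable def sdiam {G : Type*} [Group G] (S : Set G) : ℕ :=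
  sInf {n : ℕ | S ^ n = (Set.univ : Set G)}

/-- The first nonzero eigenvalue of the Laplacian of the Cayley graph of `G` with respect
to `S`, given variationally as the infimum of the Rayleigh quotient over nonzero mean-zero
functions. -/
noncomputable def lambdaOne (G : Type*) [Group G] [Fintype G] (S : Finset G) : ℝ :=
  sInf { r : ℝ | ∃ f : G → ℝ, f ≠ 0 ∧ (∑ x, f x) = 0 ∧
    r = (∑ x, ∑ s ∈ S, (f (x * s) - f x) ^ 2) / (2 * ∑ x, (f x) ^ 2) }

/-- The Cheeger constant of the Cayley graph of a finite group with respect to a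
generating set `S`: the infimum over nonempty `A` with `2|A| ≤ |G|` of
`|{(a,s) ∈ A × S : a·s ∉ A}|/|A|`. -/
noncomputable def cheeger {G : Type*} [Group G] (S : Set G) : ℝ :=
  sInf { r : ℝ | ∃ A : Set G, A.Nonempty ∧ 2 * Nat.card A ≤ Nat.card G ∧
    r = (Nat.card {p : G × G | p.1 ∈ A ∧ p.2 ∈ S ∧ p.1 * p.2 ∉ A} : ℝ) / (Nat.card A : ℝ) }

open Finset

section Diameter

variable {M : Type*} [Monoid M]

theorem le_nsmul_of_mem_pow {A : Type*} [AddCommMonoid A] [PartialOrder A]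
    [IsOrderedAddMonoid A] {φ : M → A} (h_one : φ 1 ≤ 0) (h_mul : ∀ a b, φ (a * b) ≤ φ a + φ b)
    {S : Set M} {B : A} (hS : ∀ s ∈ S, φ s ≤ B) {n : ℕ} {x : M} (hx : x ∈ S ^ n) : φ x ≤ n • B := by
  induction n generalizing x with
  | zero =>
    rw [pow_zero, Set.mem_one] at hx
    simpa [hx] using h_one
  | succ n ih =>
    obtain ⟨a, ha, s, hs, rfl⟩ := Set.mem_mul.mp (pow_succ S n ▸ hx)
    calc φ (a * s) ≤ φ a + φ s := h_mul a s
      _ ≤ n • B + B := add_le_add (ih ha) (hS s hs)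
      _ = (n + 1) • B := (succ_nsmul B n).symm

theorem exists_pow_eq_univ [Finite M] {S : Set M} (h1 : (1 : M) ∈ S)
    (hS : Submonoid.closure S = ⊤) : ∃ n, S ^ n = Set.univ := by
  have hmem : ∀ x : M, ∃ n, x ∈ S ^ n := by
    intro x
    induction (hS ▸ Submonoid.mem_top x : x ∈ Submonoid.closure S)
      using Submonoid.closure_induction with
    | mem s hs => exact ⟨1, by simpa using hs⟩
    | one => exact ⟨0, by simp⟩
    | mul a b _ _ iha ihb =>
      obtain ⟨m, hm⟩ := iha
      obtain ⟨k, hk⟩ := ihb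
      exact ⟨m + k, pow_add S m k ▸ Set.mul_mem_mul hm hk⟩
  cases nonempty_fintype M
  choose N hN using hmem
  exact ⟨univ.sup N, Set.eq_univ_of_forall fun x =>
    Set.pow_subset_pow_right h1 (le_sup (mem_univ x)) (hN x)⟩

theorem pos_of_pow_eq_univ [Nontrivial M] {S : Set M} {n : ℕ} (h : S ^ n = Set.univ) :
    0 < n := by
  refine Nat.pos_of_ne_zero fun h0 => ?_
  obtain ⟨x, hx⟩ := exists_ne (1 : M)
  rw [h0, pow_zero] at h
  exact hx (Set.mem_one.mp (h ▸ Set.mem_univ x))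

theorem pow_sdiam_eq_univ {G : Type*} [Group G] {S : Set G} (h : ∃ n, S ^ n = Set.univ) :
    S ^ sdiam S = Set.univ :=
  Nat.sInf_mem h

end Diameter

section Spectral

variable {G : Type*} [Group G] [Fintype G]

noncomputable def shiftDist (f : G → ℝ) (g : G) : ℝ :=
  √(∑ x, (f (x * g) - f x) ^ 2)

theorem shiftDist_eq_norm (f : G → ℝ) (g : G) :
    shiftDist f g = ‖WithLp.toLp 2 (fun x => f (x * g) - f x)‖ := by
  simp [shiftDist, EuclideanSpace.norm_eq]

theorem shiftDist_mul_le (f : G → ℝ) (g h : G) :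
    shiftDist f (g * h) ≤ shiftDist f g + shiftDist f h := by
  have hshift : shiftDist f h = ‖WithLp.toLp 2 (fun x => f (x * g * h) - f (x * g))‖ := by
    rw [shiftDist, EuclideanSpace.norm_eq]
    congr 1
    exact (Fintype.sum_equiv (Equiv.mulRight g) _ _ fun x => by simp [mul_assoc]).symm
  have hsplit : (WithLp.toLp 2 fun x => f (x * (g * h)) - f x : EuclideanSpace ℝ G) =
      WithLp.toLp 2 (fun x => f (x * g * h) - f (x * g)) +
        WithLp.toLp 2 fun x => f (x * g) - f x := by
    ext x
    simp [mul_assoc]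
  rw [hshift, shiftDist_eq_norm, shiftDist_eq_norm, hsplit, add_comm (‖_‖)]
  exact norm_add_le _ _

theorem shiftDist_le_sqrt_energy (f : G → ℝ) {S : Finset G} {s : G} (hs : s ∈ S) :
    shiftDist f s ≤ √(∑ x, ∑ t ∈ S, (f (x * t) - f x) ^ 2) := by
  refine Real.sqrt_le_sqrt ?_
  rw [sum_comm]
  exact single_le_sum (f := fun t => ∑ x, (f (x * t) - f x) ^ 2)
    (fun _ _ => sum_nonneg fun _ _ => sq_nonneg _) hs

theorem sum_shiftDist_sq {f : G → ℝ} (hf : ∑ x, f x = 0) :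
    ∑ g, shiftDist f g ^ 2 = 2 * Fintype.card G * ∑ x, f x ^ 2 := by
  have hrow : ∀ x : G,
      ∑ g, (f (x * g) - f x) ^ 2 = ∑ y, f y ^ 2 + Fintype.card G * f x ^ 2 := by
    intro x
    rw [show ∑ g, (f (x * g) - f x) ^ 2 = ∑ y, (f y - f x) ^ 2 from
      Fintype.sum_equiv (Equiv.mulLeft x) _ _ fun _ => rfl]
    simp only [sub_sq, sum_add_distrib, sum_sub_distrib, ← sum_mul, ← mul_sum, hf]
    simp [card_univ]
  simp only [shiftDist, Real.sq_sqrt (sum_nonneg fun _ _ => sq_nonneg _)]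
  rw [sum_comm]
  simp only [hrow, sum_add_distrib, ← mul_sum, sum_const, card_univ, nsmul_eq_mul]
  ring

theorem two_mul_sum_sq_le {S : Finset G} {n : ℕ} (hS : (S : Set G) ^ n = Set.univ)
    {f : G → ℝ} (hf : ∑ x, f x = 0) :
    2 * ∑ x, f x ^ 2 ≤ (n : ℝ) ^ 2 * ∑ x, ∑ s ∈ S, (f (x * s) - f x) ^ 2 := by
  set E := ∑ x, ∑ s ∈ S, (f (x * s) - f x) ^ 2
  have hE : 0 ≤ E := sum_nonneg fun _ _ => sum_nonneg fun _ _ => sq_nonneg _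
  have hpoint : ∀ g, shiftDist f g ^ 2 ≤ (n : ℝ) ^ 2 * E := fun g => by
    have hg : shiftDist f g ≤ n • √E :=
      le_nsmul_of_mem_pow (by simp [shiftDist]) (shiftDist_mul_le f)
        (fun s hs => shiftDist_le_sqrt_energy f hs) (hS ▸ Set.mem_univ g)
    rw [nsmul_eq_mul] at hg
    calc shiftDist f g ^ 2 ≤ (n * √E) ^ 2 := pow_le_pow_left₀ (Real.sqrt_nonneg _) hg 2
      _ = (n : ℝ) ^ 2 * E := by rw [mul_pow, Real.sq_sqrt hE]
  have hsum := sum_le_sum fun g (_ : g ∈ univ) => hpoint g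
  rw [sum_shiftDist_sq hf, sum_const, card_univ, nsmul_eq_mul] at hsum
  have hG : (0 : ℝ) < Fintype.card G := by exact_mod_cast Fintype.card_pos
  nlinarith

theorem inv_sq_le_lambdaOne [Nontrivial G] {S : Finset G} {n : ℕ}
    (hS : (S : Set G) ^ n = Set.univ) : ((n : ℝ) ^ 2)⁻¹ ≤ lambdaOne G S := by
  classical
  have hn : (0 : ℝ) < n := by exact_mod_cast pos_of_pow_eq_univ hS
  apply le_csInf
  · obtain ⟨a, b, hab⟩ := exists_pair_ne G
    refine ⟨_, Pi.single a 1 - Pi.single b 1, fun h0 => ?_, ?_, rfl⟩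
    · simpa [hab] using congrFun h0 a
    · simp [sum_sub_distrib]
  · rintro r ⟨f, hf0, hf, rfl⟩
    have hT : 0 < ∑ x, f x ^ 2 := by
      obtain ⟨x, hx⟩ := Function.ne_iff.mp hf0
      exact sum_pos' (fun _ _ => sq_nonneg _) ⟨x, mem_univ x, pow_two_pos_of_ne_zero hx⟩
    rw [le_div_iff₀ (by positivity), ← div_eq_inv_mul, div_le_iff₀' (by positivity)]
    exact two_mul_sum_sq_le hS hf

end Spectral

section Cheeger

variable {G : Type*} [Group G] [DecidableEq G]

def escapeCount (A : Finset G) (g : G) : ℕ :=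
  #{a ∈ A | a * g ∉ A}

theorem escapeCount_one (A : Finset G) : escapeCount A 1 = 0 := by
  simp [escapeCount]

theorem escapeCount_mul_le (A : Finset G) (g h : G) :
    escapeCount A (g * h) ≤ escapeCount A g + escapeCount A h := by
  have hsub : {a ∈ A | a * (g * h) ∉ A} ⊆
      {a ∈ A | a * g ∉ A} ∪ ({b ∈ A | b * h ∉ A} : Finset G).image (· * g⁻¹) := by
    intro a ha
    simp only [mem_filter, mem_union, mem_image] at ha ⊢
    by_cases hag : a * g ∈ A
    · exact Or.inr ⟨a * g, ⟨hag, by rw [mul_assoc]; exact ha.2⟩, by group⟩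
    · exact Or.inl ⟨ha.1, hag⟩
  calc escapeCount A (g * h) ≤ _ := card_le_card hsub
    _ ≤ _ := card_union_le _ _
    _ ≤ escapeCount A g + escapeCount A h := add_le_add le_rfl card_image_le

theorem escapeCount_le_card_boundary [Finite G] (A : Finset G) {S : Set G} {s : G}
    (hs : s ∈ S) :
    escapeCount A s ≤
      Nat.card {p : G × G | p.1 ∈ (A : Set G) ∧ p.2 ∈ S ∧ p.1 * p.2 ∉ (A : Set G)} := by
  rw [escapeCount, ← Set.ncard_coe_finset, Nat.card_coe_set_eq]
  refine Set.ncard_le_ncard_of_injOn (fun a => (a, s)) ?_ ?_ (Set.toFinite _)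
  · intro a ha
    simp only [coe_filter, Set.mem_ofPred_eq, mem_coe] at ha ⊢
    exact ⟨ha.1, hs, ha.2⟩
  · intro a _ b _ hab
    exact congrArg Prod.fst hab

theorem sum_escapeCount [Fintype G] (A : Finset G) :
    ∑ g, escapeCount A g = #A * #Aᶜ := by
  have hrow : ∀ a : G, ∑ g, (if a * g ∉ A then 1 else 0) = #Aᶜ := fun a => by
    rw [show ∑ g, (if a * g ∉ A then 1 else 0) = ∑ y, if y ∉ A then 1 else 0 from
      Fintype.sum_equiv (Equiv.mulLeft a) _ _ fun _ => rfl, ← card_filter]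
    congr 1
    ext
    simp
  simp only [escapeCount, card_filter]
  rw [sum_comm]
  simp only [hrow, sum_const, smul_eq_mul]

theorem card_le_two_mul_card_boundary [Fintype G] {S : Set G} {n : ℕ} (hS : S ^ n = Set.univ)
    (A : Finset G) (hA : 2 * #A ≤ Nat.card G) :
    #A ≤ 2 * n *
      Nat.card {p : G × G | p.1 ∈ (A : Set G) ∧ p.2 ∈ S ∧ p.1 * p.2 ∉ (A : Set G)} := by
  set B := Nat.card {p : G × G | p.1 ∈ (A : Set G) ∧ p.2 ∈ S ∧ p.1 * p.2 ∉ (A : Set G)}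
  have hpoint : ∀ g, escapeCount A g ≤ n * B := fun g => by
    have := le_nsmul_of_mem_pow (escapeCount_one A).le (escapeCount_mul_le A)
      (fun s hs => escapeCount_le_card_boundary A hs) (hS ▸ Set.mem_univ g)
    rwa [smul_eq_mul] at this
  have hsum : #A * #Aᶜ ≤ Fintype.card G * (n * B) := by
    simpa [sum_escapeCount] using sum_le_sum fun g (_ : g ∈ univ) => hpoint g
  have hcompl : Fintype.card G ≤ 2 * #Aᶜ := by
    rw [card_compl, ← Nat.card_eq_fintype_card]
    omega
  have hG : 0 < Fintype.card G := Fintype.card_pos_iff.mpr ⟨1⟩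
  refine Nat.le_of_mul_le_mul_left ?_ hG
  calc Fintype.card G * #A ≤ 2 * #Aᶜ * #A := Nat.mul_le_mul_right _ hcompl
    _ = 2 * (#A * #Aᶜ) := by ring
    _ ≤ 2 * (Fintype.card G * (n * B)) := Nat.mul_le_mul_left _ hsum
    _ = Fintype.card G * (2 * n * B) := by ring

end Cheeger

theorem inv_two_mul_le_cheeger {G : Type*} [Group G] [Fintype G] [Nontrivial G] {S : Set G}
    {n : ℕ} (hS : S ^ n = Set.univ) : (2 * (n : ℝ))⁻¹ ≤ cheeger S := by
  classical
  have hn : (0 : ℝ) < n := by exact_mod_cast pos_of_pow_eq_univ hS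
  apply le_csInf
  · refine ⟨_, {1}, Set.singleton_nonempty _, ?_, rfl⟩
    rw [Nat.card_coe_set_eq, Set.ncard_singleton]
    exact Finite.one_lt_card_iff_nontrivial.mpr ‹_›
  · rintro r ⟨A, hA, hAcard, rfl⟩
    obtain ⟨A, rfl⟩ : ∃ A' : Finset G, (A' : Set G) = A := ⟨A.toFinset, Set.coe_toFinset A⟩
    rw [Nat.card_coe_set_eq, Set.ncard_coe_finset] at hAcard
    have hA0 : (0 : ℝ) < #A := by exact_mod_cast card_pos.mpr (coe_nonempty.mp hA)
    rw [Nat.card_coe_set_eq (A : Set G), Set.ncard_coe_finset, le_div_iff₀ hA0,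
      ← div_eq_inv_mul, div_le_iff₀' (by positivity)]
    exact_mod_cast card_le_two_mul_card_boundary hS A hAcard

theorem div_rpow_div_three_le {a b ε n : ℝ} (ha : 0 < a) (hb : 0 < b) (hn : 0 < n)
    (h : (n ^ 3)⁻¹ ≤ (a / b) ^ ε) : (b / a) ^ (ε / 3) ≤ n := by
  have hba : (b / a) ^ ε ≤ n ^ 3 := by
    rw [← inv_div, Real.inv_rpow (div_pos ha hb).le]
    exact inv_le_of_inv_le₀ (by positivity) h
  rw [show ε / 3 = ε * 3⁻¹ by ring, Real.rpow_mul (div_pos hb ha).le,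
    Real.rpow_inv_le_iff_of_pos (by positivity) hn.le (by norm_num)]
  exact_mod_cast hba

theorem stmt5_general (ε : ℝ) (G : Type*) [Group G] [Fintype G] (S : Finset G)
    (hG : 2 ≤ Nat.card G)
    (h1 : (1 : G) ∈ S)
    (hgen : Subgroup.closure (S : Set G) = ⊤)
    (h : lambdaOne G S ≤ min ((2 : ℝ) ^ (-9 : ℤ)) (((S.card : ℝ) / (Nat.card G : ℝ)) ^ ε) ∨
         cheeger (S : Set G) ≤
           min ((2 : ℝ) ^ (-2 : ℤ)) (((S.card : ℝ) / (Nat.card G : ℝ)) ^ ε)) :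
    ((Nat.card G : ℝ) / (S.card : ℝ)) ^ (ε / 3) ≤ (sdiam (S : Set G) : ℝ) := by
  have : Nontrivial G := Finite.one_lt_card_iff_nontrivial.mp hG
  have hS : (S : Set G) ^ sdiam (S : Set G) = Set.univ := by
    refine pow_sdiam_eq_univ (exists_pow_eq_univ (by simpa using h1) ?_)
    rw [← Subgroup.closure_toSubmonoid_of_finite, hgen, Subgroup.top_toSubmonoid]
  set n := sdiam (S : Set G)
  have hn : (1 : ℝ) ≤ n := by exact_mod_cast pos_of_pow_eq_univ hS
  refine div_rpow_div_three_le (by exact_mod_cast card_pos.mpr ⟨1, h1⟩)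
    (by exact_mod_cast Nat.card_pos) (by linarith) ?_
  rcases h with hlambda | hcheeger
  · calc ((n : ℝ) ^ 3)⁻¹ ≤ ((n : ℝ) ^ 2)⁻¹ :=
          inv_anti₀ (by positivity) (pow_le_pow_right₀ hn (by norm_num))
      _ ≤ lambdaOne G S := inv_sq_le_lambdaOne hS
      _ ≤ _ := hlambda.trans (min_le_right _ _)
  · have hc := (inv_two_mul_le_cheeger hS).trans hcheeger
    have hn2 : 2 ≤ (n : ℝ) := by
      have := hc.trans (min_le_left _ _)
      rw [zpow_neg, inv_le_inv₀ (by linarith) (by norm_num)] at this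
      norm_num at this
      linarith
    calc ((n : ℝ) ^ 3)⁻¹ ≤ (2 * (n : ℝ))⁻¹ :=
          inv_anti₀ (by linarith) (by nlinarith [sq_nonneg (n : ℝ)])
      _ ≤ _ := hc.trans (min_le_right _ _)

/-- **Groups with very small Cheeger constant or spectral gap are almost flat.**
If `λ₁(G,S) ≤ min{2⁻⁹, (|S|/|G|)^ε}` or `h(G,S) ≤ min{2⁻², (|S|/|G|)^ε}` then
`diam_S(G) ≥ (|G|/|S|)^{ε/3}`. -/
theorem stmt5 (ε : ℝ) (hε : 0 < ε) (G : Type*) [Group G] [Fintype G] (S : Finset G)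
    (hG : 2 ≤ Nat.card G)
    (h1 : (1 : G) ∈ S) (hsym : ∀ s ∈ S, s⁻¹ ∈ S)
    (hgen : Subgroup.closure (S : Set G) = ⊤)
    (h : lambdaOne G S ≤ min ((2 : ℝ) ^ (-9 : ℤ)) (((S.card : ℝ) / (Nat.card G : ℝ)) ^ ε) ∨
         cheeger (S : Set G) ≤
           min ((2 : ℝ) ^ (-2 : ℤ)) (((S.card : ℝ) / (Nat.card G : ℝ)) ^ ε)) :
    ((Nat.card G : ℝ) / (S.card : ℝ)) ^ (ε / 3) ≤ (sdiam (S : Set G) : ℝ) :=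
  stmt5_general ε G S hG h1 hgen h
end

section
/- Let G be a group, let S ⊆ G be a finite symmetric subset, let K ≥ 1 be a real number, and suppose that |S^{5n}| ≤ K·|S^n| for some integer n ≥ 1. Then S^{2n} is a K-approximate subgroup of G; that is, there exists a subset X ⊆ G with |X| ≤ K such that S^{4n} ⊆ X·S^{2n}. -/
/-!
Ruzsa's covering lemma for `A = S^{4n}` and `B = S^n`, whose product is `S^{5n}`, covers
`S^{4n}` by at most `K` left translates of `B / B = S^n S^{-n}`, and symmetry of `S` turns
`B / B` into `S^{2n}`.
-/

open Pointwise

namespace Finset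

variable {G : Type*} [Group G] [DecidableEq G]

theorem inv_eq_self_of_forall_inv_mem {S : Finset G} (hS : ∀ s ∈ S, s⁻¹ ∈ S) : S⁻¹ = S := by
  refine subset_antisymm (fun x hx => ?_) fun x hx => mem_inv'.2 (hS x hx)
  simpa using hS _ (mem_inv'.1 hx)

theorem ruzsa_covering_mul_of_inv_eq_self {A B : Finset G} {K : ℝ} (hB : B.Nonempty)
    (hBinv : B⁻¹ = B) (hK : #(A * B) ≤ K * #B) : ∃ F : Finset G, #F ≤ K ∧ A ⊆ F * B ^ 2 := by
  obtain ⟨F, -, hF, hAF⟩ := ruzsa_covering_mul hB hK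
  exact ⟨F, hF, by rwa [div_eq_mul_inv, hBinv, ← sq] at hAF⟩

end Finset

theorem stmt9_general {G : Type*} [Group G] [DecidableEq G] (S : Finset G) (K : ℝ)
    (h1 : (1 : G) ∈ S) (hsym : ∀ s ∈ S, s⁻¹ ∈ S)
    (n : ℕ)
    (hdoub : ((S ^ (5 * n)).card : ℝ) ≤ K * ((S ^ n).card : ℝ)) :
    ∃ X : Finset G, (X.card : ℝ) ≤ K ∧ S ^ (4 * n) ⊆ X * S ^ (2 * n) := by
  have hSn : (S ^ n)⁻¹ = S ^ n := by rw [← inv_pow, Finset.inv_eq_self_of_forall_inv_mem hsym]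
  have hprod : S ^ (4 * n) * S ^ n = S ^ (5 * n) := by rw [← pow_add]; ring_nf
  obtain ⟨X, hX, hcov⟩ := Finset.ruzsa_covering_mul_of_inv_eq_self (A := S ^ (4 * n))
    ⟨1, Finset.one_mem_pow h1⟩ hSn (by rwa [hprod])
  exact ⟨X, hX, by rwa [← pow_mul, mul_comm n 2] at hcov⟩

/-- **Small doubling gives an approximate group.**
If `S` is a finite symmetric subset of a group `G` with `|S^{5n}| ≤ K|S^n|` for some
`n ≥ 1`, then `S^{2n}` is a `K`-approximate subgroup of `G`: there is `X ⊆ G` with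
`|X| ≤ K` and `S^{4n} ⊆ X·S^{2n}`. -/
theorem stmt9 {G : Type*} [Group G] [DecidableEq G] (S : Finset G) (K : ℝ) (hK : 1 ≤ K)
    (h1 : (1 : G) ∈ S) (hsym : ∀ s ∈ S, s⁻¹ ∈ S)
    (n : ℕ) (hn : 1 ≤ n)
    (hdoub : ((S ^ (5 * n)).card : ℝ) ≤ K * ((S ^ n).card : ℝ)) :
    ∃ X : Finset G, (X.card : ℝ) ≤ K ∧ S ^ (4 * n) ⊆ X * S ^ (2 * n) :=
  stmt9_general S K h1 hsym n hdoub
end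

section
/- Let G be a group generated by a finite symmetric set S containing the identity, let Γ be a subgroup of G, and let k ∈ ℕ. Suppose there is a subset T ⊆ G with |T| ≤ k such that S^k ⊆ T·Γ (i.e. S^k is contained in at most k left-cosets of Γ). Then G = S^k·Γ; in particular the index [G:Γ] is at most k. -/
/-!
Let `Bₙ ⊆ G ⧸ Γ` be the image of `Sⁿ`. Since `1 ∈ S`, the sets `Bₙ` increase, starting from
`|B₀| = 1`, while `|Bₖ| ≤ k`; hence `B_{n+1} = Bₙ` for some `n < k`. Then for every `s ∈ S` we
have `s • Bₙ ⊆ B_{n+1} = Bₙ`, hence `s • Bₙ = Bₙ` by counting; so `Bₙ` is stable under the group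
generated by `S`, which is all of `G`. As `Bₙ` contains the trivial coset, it is all of `G ⧸ Γ`.
-/

open Pointwise

lemma Nat.exists_lt_succ_le_of_le (f : ℕ → ℕ) (h0 : 1 ≤ f 0) :
    ∀ {k : ℕ}, f k ≤ k → ∃ n < k, f (n + 1) ≤ f n
  | 0, hk => absurd hk (by omega)
  | k + 1, hk => by
    by_cases hstep : f (k + 1) ≤ f k
    · exact ⟨k, k.lt_succ_self, hstep⟩
    · obtain ⟨n, hn, hle⟩ := Nat.exists_lt_succ_le_of_le f h0 (k := k) (by omega)
      exact ⟨n, by omega, hle⟩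

namespace MulAction

variable {G α : Type*} [Group G] [MulAction G α] [DecidableEq α]

lemma smul_finset_eq_of_closure_eq_top {S : Set G} (hgen : Subgroup.closure S = ⊤)
    {B : Finset α} (hB : ∀ s ∈ S, s • B ⊆ B) (g : G) : g • B = B := by
  have hstab : Subgroup.closure S ≤ stabilizer G B := (Subgroup.closure_le _).2 fun s hs ↦
    mem_stabilizer_iff.2 <|
      Finset.eq_of_subset_of_card_le (hB s hs) (Finset.card_smul_finset s B).ge
  exact mem_stabilizer_iff.1 (hstab (hgen ▸ Subgroup.mem_top g))

variable [DecidableEq G] {S : Finset G}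

lemma smul_image_pow_subset {s : G} (hs : s ∈ S) (x : α) (n : ℕ) :
    s • (S ^ n).image (· • x) ⊆ (S ^ (n + 1)).image (· • x) := by
  intro y hy
  obtain ⟨_, hz, rfl⟩ := Finset.mem_smul_finset.1 hy
  obtain ⟨t, ht, rfl⟩ := Finset.mem_image.1 hz
  rw [pow_succ']
  exact Finset.mem_image.2 ⟨s * t, Finset.mul_mem_mul hs ht, mul_smul s t x⟩

lemma smul_mem_image_pow_of_card_le (h1 : 1 ∈ S) (hgen : Subgroup.closure (S : Set G) = ⊤)
    (x : α) {k : ℕ} (hk : ((S ^ k).image (· • x)).card ≤ k) (g : G) :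
    g • x ∈ (S ^ k).image (· • x) := by
  set B : ℕ → Finset α := fun n ↦ (S ^ n).image (· • x) with hB
  have hmono {m n : ℕ} (hmn : m ≤ n) : B m ⊆ B n :=
    Finset.image_subset_image (Finset.pow_subset_pow_right h1 hmn)
  have hB0 : (B 0).card = 1 := by simp [hB]
  obtain ⟨n, hnk, hcard⟩ :=
    Nat.exists_lt_succ_le_of_le (fun n ↦ (B n).card) hB0.ge hk
  have hstable : B (n + 1) = B n :=
    (Finset.eq_of_subset_of_card_le (hmono n.le_succ) hcard).symm
  have hinv : g • B n = B n := smul_finset_eq_of_closure_eq_top hgen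
    (fun s hs ↦ (smul_image_pow_subset hs x n).trans hstable.subset) g
  have hx : x ∈ B n := Finset.mem_image.2 ⟨1, Finset.one_mem_pow h1, one_smul G x⟩
  exact hmono hnk.le (hinv ▸ Finset.smul_mem_smul_finset hx)

end MulAction

theorem stmt11_general {G : Type*} [Group G] [DecidableEq G] (S : Finset G)
    (h1 : (1 : G) ∈ S)
    (hgen : Subgroup.closure (S : Set G) = ⊤)
    (Γ : Subgroup G) (k : ℕ) (T : Finset G) (hT : T.card ≤ k)
    (hcover : ((S ^ k : Finset G) : Set G) ⊆ (T : Set G) * (Γ : Set G)) :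
    ((S ^ k : Finset G) : Set G) * (Γ : Set G) = Set.univ ∧
      Γ.index ≠ 0 ∧ Γ.index ≤ k := by
  classical
  set B : Finset (G ⧸ Γ) := (S ^ k).image (↑) with hB
  have hBT : B ⊆ T.image (↑) := by
    intro q hq
    obtain ⟨x, hx, rfl⟩ := Finset.mem_image.1 hq
    obtain ⟨t, ht, γ, hγ, rfl⟩ := hcover hx
    exact Finset.mem_image.2 ⟨t, ht, (QuotientGroup.mk_mul_of_mem t hγ).symm⟩
  have hcard : B.card ≤ k := (Finset.card_le_card hBT).trans (Finset.card_image_le.trans hT)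
  have hmk : (fun g : G ↦ g • ((1 : G) : G ⧸ Γ)) = (↑) := funext fun g ↦ by simp
  have hBuniv : (B : Set (G ⧸ Γ)) = Set.univ := Set.eq_univ_of_forall fun q ↦ by
    obtain ⟨g, rfl⟩ := QuotientGroup.mk_surjective q
    have := MulAction.smul_mem_image_pow_of_card_le h1 hgen ((1 : G) : G ⧸ Γ)
      (by rwa [hmk]) g
    rw [hmk] at this
    rw [Finset.mem_coe]
    simpa [hB] using this
  have hindex : Γ.index = B.card := by
    rw [Subgroup.index, ← Nat.card_univ, ← hBuniv]
    exact Nat.card_eq_finsetCard B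
  have hBpos : 0 < B.card := Finset.card_pos.2 ⟨_, hBuniv ▸ Set.mem_univ ((1 : G) : G ⧸ Γ)⟩
  refine ⟨?_, by omega, by omega⟩
  rw [← QuotientGroup.preimage_image_mk_eq_mul, ← Finset.coe_image, ← hB, hBuniv,
    Set.preimage_univ]

/-- **A ball contained in few cosets gives a finite-index subgroup.**
If `G` is generated by a finite symmetric set `S` containing the identity, `Γ ≤ G`, and
`S^k` is contained in at most `k` left cosets of `Γ` (i.e. `S^k ⊆ T·Γ` with `|T| ≤ k`),
then `G = S^k·Γ`; in particular `[G:Γ] ≤ k`. -/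
theorem stmt11 {G : Type*} [Group G] [DecidableEq G] (S : Finset G)
    (h1 : (1 : G) ∈ S) (hsym : ∀ s ∈ S, s⁻¹ ∈ S)
    (hgen : Subgroup.closure (S : Set G) = ⊤)
    (Γ : Subgroup G) (k : ℕ) (T : Finset G) (hT : T.card ≤ k)
    (hcover : ((S ^ k : Finset G) : Set G) ⊆ (T : Set G) * (Γ : Set G)) :
    ((S ^ k : Finset G) : Set G) * (Γ : Set G) = Set.univ ∧
      Γ.index ≠ 0 ∧ Γ.index ≤ k :=
  stmt11_general S h1 hgen Γ k T hT hcover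
end

section
/- Let π : G → G' be a group homomorphism with kernel N, let K ≥ 1 be a real number, and let A be a finite symmetric subset of G such that N ⊆ A and such that the image π(A) is a K-approximate subgroup of G'. Then A² is a K³-approximate subgroup of G; that is, there exists X ⊆ G with |X| ≤ K³ such that A⁴ ⊆ X·A². -/
open Pointwise

namespace Finset

variable {G : Type*} [DecidableEq G]

theorem pow_succ_subset_pow_mul_of_mul_subset [Monoid G] {B Y : Finset G} (hB : B * B ⊆ Y * B) :
    ∀ n : ℕ, B ^ (n + 1) ⊆ Y ^ n * B
  | 0 => by simp
  | n + 1 =>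
    calc B ^ (n + 2) = B ^ (n + 1) * B := pow_succ B (n + 1)
      _ ⊆ Y ^ n * B * B := mul_subset_mul_right (pow_succ_subset_pow_mul_of_mul_subset hB n)
      _ = Y ^ n * (B * B) := mul_assoc _ _ _
      _ ⊆ Y ^ n * (Y * B) := mul_subset_mul_left hB
      _ = Y ^ (n + 1) * B := by rw [← mul_assoc, ← pow_succ]

/-- The fibre of `π` through `x * a` is `x * ker π * a ⊆ x * A * a`. -/
theorem exists_card_le_subset_mul_sq_of_image_subset_mul {G' : Type*} [Group G] [Group G']
    [DecidableEq G'] (π : G →* G') {A S : Finset G} (hA : (π.ker : Set G) ⊆ A) {Z : Finset G'}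
    (hS : S.image π ⊆ Z * A.image π) : ∃ X : Finset G, #X ≤ #Z ∧ S ⊆ X * A ^ 2 := by
  refine ⟨Z.image (Function.invFun π), card_image_le, fun g hg => ?_⟩
  obtain ⟨z, hz, _, hb, hza⟩ := mem_mul.mp (hS (mem_image_of_mem π hg))
  obtain ⟨a, ha, rfl⟩ := mem_image.mp hb
  set x := Function.invFun π z
  have hx : π x = z := Function.invFun_eq ⟨g * a⁻¹, by simp [← hza]⟩
  have hker : x⁻¹ * g * a⁻¹ ∈ π.ker := by simp [hx, ← hza]
  have hg : g = x * ((x⁻¹ * g * a⁻¹) * a) := by group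
  rw [hg, sq]
  exact mul_mem_mul (mem_image_of_mem _ hz) (mul_mem_mul (hA hker) ha)

end Finset

theorem stmt14_general {G G' : Type*} [Group G] [Group G'] [DecidableEq G] [DecidableEq G']
    (π : G →* G') (N : Subgroup G) (hN : N = π.ker) (K : ℝ)
    (A : Finset G)
    (hNA : (N : Set G) ⊆ (A : Set G))
    (happ : ∃ Y : Finset G', (Y.card : ℝ) ≤ K ∧
      A.image π * A.image π ⊆ Y * A.image π) :
    ∃ X : Finset G, (X.card : ℝ) ≤ K ^ 3 ∧ A ^ 4 ⊆ X * A ^ 2 := by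
  subst hN
  obtain ⟨Y, hYK, hY⟩ := happ
  have hcover : (A ^ 4).image π ⊆ Y ^ 3 * A.image π := by
    rw [Finset.image_pow]
    exact Finset.pow_succ_subset_pow_mul_of_mul_subset hY 3
  obtain ⟨X, hXY, hX⟩ := Finset.exists_card_le_subset_mul_sq_of_image_subset_mul π hNA hcover
  refine ⟨X, ?_, hX⟩
  calc (X.card : ℝ) ≤ ((Y ^ 3).card : ℝ) := by exact_mod_cast hXY
    _ ≤ (Y.card : ℝ) ^ 3 := by exact_mod_cast Finset.card_pow_le
    _ ≤ K ^ 3 := by gcongr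

/-- **Pulling back an approximate group along a quotient.**
Let `π : G → G'` be a homomorphism with kernel `N`, let `K ≥ 1`, and let `A` be a finite
symmetric subset of `G` with `N ⊆ A` such that `π(A)` is a `K`-approximate subgroup of
`G'`.  Then `A²` is a `K³`-approximate subgroup of `G`: there is `X ⊆ G` with `|X| ≤ K³`
and `A⁴ ⊆ X·A²`. -/
theorem stmt14 {G G' : Type*} [Group G] [Group G'] [DecidableEq G] [DecidableEq G']
    (π : G →* G') (N : Subgroup G) (hN : N = π.ker) (K : ℝ) (hK : 1 ≤ K)
    (A : Finset G) (h1 : (1 : G) ∈ A) (hsym : ∀ a ∈ A, a⁻¹ ∈ A)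
    (hNA : (N : Set G) ⊆ (A : Set G))
    (happ : ∃ Y : Finset G', (Y.card : ℝ) ≤ K ∧
      A.image π * A.image π ⊆ Y * A.image π) :
    ∃ X : Finset G, (X.card : ℝ) ≤ K ^ 3 ∧ A ^ 4 ⊆ X * A ^ 2 :=
  stmt14_general π N hN K A hNA happ
end

section
/- For all integers r ≥ 1 and s ≥ 1 there exists a constant c = c(r,s) > 0 such that every finite nilpotent group G of nilpotency class at most s that is generated by at most r elements satisfies |G/[G,G]| ≥ |G|^c, where [G,G] denotes the commutator subgroup of G. -/
/-!
Let `γₖ` be the lower central series and `a = |G/[G,G]| = |γ₀/γ₁|`. Modulo `γₖ₊₂` the commutator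
is bilinear on `γₖ × G`, so for each generator `t` the map `x ↦ [x, t]` is a homomorphism
`γₖ/γₖ₊₁ → γₖ₊₁/γₖ₊₂`, and the images of these maps over the `r` generators generate
`γₖ₊₁/γₖ₊₂`. Hence `|γₖ₊₁/γₖ₊₂| ≤ |γₖ/γₖ₊₁|^r`, so `|γₖ/γₖ₊₁| ≤ a^(r^k)`, and if `γₛ = 1` then
`|G| ≤ a^N` with `N = 1 + r + ⋯ + r^(s-1)`; the constant `c = 1/(N+1)` works.
-/

open Subgroup
open scoped commutatorElement

namespace Subgroup

variable {G : Type*} [Group G] {H : Subgroup G}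

lemma commutatorElement_mem_center (hH : ⁅H, ⊤⁆ ≤ center G) {x : G} (hx : x ∈ H) (g : G) :
    ⁅x, g⁆ ∈ center G :=
  hH (commutator_mem_commutator hx (mem_top g))

def commutatorLeftHom (hH : ⁅H, ⊤⁆ ≤ center G) (g : G) : H →* G where
  toFun x := ⁅(x : G), g⁆
  map_one' := commutatorElement_one_left g
  map_mul' x y := by
    have hy := mem_center_iff.mp (commutatorElement_mem_center hH y.2 g)
    rw [coe_mul, commutatorElement_mul_left_eq_conj_mul, hy, mul_inv_cancel_right]
    exact (hy _).symm

def commutatorRightHom (hH : ⁅H, ⊤⁆ ≤ center G) (x : H) : G →* G where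
  toFun g := ⁅(x : G), g⁆
  map_one' := commutatorElement_one_right _
  map_mul' a b := by
    have hb := mem_center_iff.mp (commutatorElement_mem_center hH x.2 b)
    rw [commutatorElement_mul_right_eq_mul_conj, mul_assoc _ a, hb, ← mul_assoc,
      mul_inv_cancel_right]

theorem card_commutator_top_le_relIndex_pow [Finite G] {ι : Type*} [Fintype ι] {t : ι → G}
    (ht : closure (Set.range t) = ⊤) (hH : ⁅H, (⊤ : Subgroup G)⁆ ≤ center G) :
    Nat.card ↥⁅H, (⊤ : Subgroup G)⁆ ≤ ⁅H, (⊤ : Subgroup G)⁆.relIndex H ^ Fintype.card ι := by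
  classical
  let φ i := commutatorLeftHom hH (t i)
  have hcomm : Pairwise fun i j => ∀ (x y : H), Commute (φ i x) (φ j y) := fun i j _ x y =>
    (mem_center_iff.mp (commutatorElement_mem_center hH x.2 (t i)) _).symm
  let Φ := MonoidHom.noncommPiCoprod φ hcomm
  -- `⁅x, ·⁆` is a homomorphism, so it suffices to check that it maps the generators `t i` into
  -- the range.
  have hrange : ⁅H, (⊤ : Subgroup G)⁆ ≤ Φ.range := by
    rw [MonoidHom.noncommPiCoprod_range, commutator_le]
    intro x hx g _
    have htop : closure (Set.range t) ≤
        (⨆ i, (φ i).range).comap (commutatorRightHom hH ⟨x, hx⟩) := by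
      rw [closure_le]
      rintro _ ⟨i, rfl⟩
      exact mem_iSup_of_mem i ⟨⟨x, hx⟩, rfl⟩
    rw [ht] at htop
    exact htop (mem_top g)
  have hker : pi Set.univ (fun _ => ⁅H, (⊤ : Subgroup G)⁆.subgroupOf H) ≤ Φ.ker := by
    rw [pi_le_iff]
    rintro i _ ⟨x, hx, rfl⟩
    rw [MonoidHom.mem_ker, MonoidHom.mulSingle_apply, MonoidHom.noncommPiCoprod_mulSingle]
    exact commutatorElement_eq_one_iff_mul_comm.mpr
      (mem_center_iff.mp (hH (mem_subgroupOf.mp hx)) (t i)).symm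
  calc Nat.card ↥⁅H, (⊤ : Subgroup G)⁆ ≤ Nat.card Φ.range := card_le_of_le hrange
    _ = Φ.ker.index := (index_ker Φ).symm
    _ ≤ (pi Set.univ fun _ => ⁅H, (⊤ : Subgroup G)⁆.subgroupOf H).index := index_antitone hker
    _ = ⁅H, (⊤ : Subgroup G)⁆.relIndex H ^ Fintype.card ι := by
      rw [index_pi, Finset.prod_const, Finset.card_univ, relIndex]

end Subgroup

section LowerCentralSeries

variable {G : Type*} [Group G] [Finite G] {ι : Type*} [Fintype ι] {t : ι → G}

theorem relIndex_lowerCentralSeries_succ_succ_le (ht : closure (Set.range t) = ⊤) (k : ℕ) :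
    ((⊤ : Subgroup G).lowerCentralSeries (k + 2)).relIndex
        ((⊤ : Subgroup G).lowerCentralSeries (k + 1)) ≤
      ((⊤ : Subgroup G).lowerCentralSeries (k + 1)).relIndex
        ((⊤ : Subgroup G).lowerCentralSeries k) ^ Fintype.card ι := by
  set N := (⊤ : Subgroup G).lowerCentralSeries (k + 2)
  set π := QuotientGroup.mk' N
  have hπ : Function.Surjective π := QuotientGroup.mk'_surjective N
  have hmap (n : ℕ) : ((⊤ : Subgroup G).lowerCentralSeries n).map π =
      (⊤ : Subgroup (G ⧸ N)).lowerCentralSeries n := by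
    rw [map_lowerCentralSeries, map_top_of_surjective π hπ]
  have hker : π.ker ≤ (⊤ : Subgroup G).lowerCentralSeries (k + 1) := by
    rw [QuotientGroup.ker_mk']
    exact Subgroup.lowerCentralSeries_antitone _ (Nat.le_succ _)
  have hgen : closure (Set.range (π ∘ t)) = ⊤ := by
    rw [Set.range_comp, ← MonoidHom.map_closure, ht, map_top_of_surjective π hπ]
  have hcentral : ⁅(⊤ : Subgroup (G ⧸ N)).lowerCentralSeries k, (⊤ : Subgroup (G ⧸ N))⁆ ≤
      center (G ⧸ N) := by
    rw [← commutator_top_right_eq_bot_iff_le_center]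
    change (⊤ : Subgroup (G ⧸ N)).lowerCentralSeries (k + 2) = ⊥
    rw [← hmap, Subgroup.map_eq_bot_iff, QuotientGroup.ker_mk']
  have hcard := card_commutator_top_le_relIndex_pow hgen hcentral
  -- `|γₖ₊₁(G/N)| = [γₖ₊₁ : N]` and `[γₖ(G/N) : γₖ₊₁(G/N)] = [γₖ : γₖ₊₁]` since `N ≤ γₖ₊₁`.
  rw [← Subgroup.lowerCentralSeries_succ, ← hmap, ← hmap, ← relIndex_ker, relIndex_map_map,
    sup_of_le_left hker,
    sup_of_le_left (hker.trans (Subgroup.lowerCentralSeries_antitone _ (Nat.le_succ _)))] at hcard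
  rwa [QuotientGroup.ker_mk'] at hcard

theorem relIndex_lowerCentralSeries_le (ht : closure (Set.range t) = ⊤) (k : ℕ) :
    ((⊤ : Subgroup G).lowerCentralSeries (k + 1)).relIndex
        ((⊤ : Subgroup G).lowerCentralSeries k) ≤
      (commutator G).index ^ Fintype.card ι ^ k := by
  induction k with
  | zero => rw [pow_zero, pow_one, Subgroup.lowerCentralSeries_zero, relIndex_top_right]; rfl
  | succ k ih =>
    calc _ ≤ _ ^ Fintype.card ι := relIndex_lowerCentralSeries_succ_succ_le ht k
      _ ≤ ((commutator G).index ^ Fintype.card ι ^ k) ^ Fintype.card ι :=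
        Nat.pow_le_pow_left ih _
      _ = _ := by rw [← pow_mul, ← pow_succ]

theorem index_lowerCentralSeries_le (ht : closure (Set.range t) = ⊤) (n : ℕ) :
    ((⊤ : Subgroup G).lowerCentralSeries n).index ≤
      (commutator G).index ^ ∑ k ∈ Finset.range n, Fintype.card ι ^ k := by
  induction n with
  | zero => simp
  | succ n ih =>
    rw [← relIndex_mul_index (Subgroup.lowerCentralSeries_antitone _ n.le_succ),
      Finset.sum_range_succ, pow_add, mul_comm]
    exact Nat.mul_le_mul ih (relIndex_lowerCentralSeries_le ht n)

end LowerCentralSeries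

lemma Real.rpow_inv_succ_le_of_le_pow {x a : ℝ} {N : ℕ} (hx : 0 ≤ x) (ha : 1 ≤ a)
    (h : x ≤ a ^ N) : x ^ ((N : ℝ) + 1)⁻¹ ≤ a := by
  rw [Real.rpow_inv_le_iff_of_pos hx (by positivity) (by positivity)]
  exact_mod_cast h.trans (pow_le_pow_right₀ ha N.le_succ)

theorem stmt18_general (r s : ℕ) :
    ∃ c : ℝ, 0 < c ∧
      ∀ (G : Type*) [Group G] [Fintype G],
        (⊤ : Subgroup G).lowerCentralSeries s = ⊥ →
        (∃ T : Finset G, T.card ≤ r ∧ Subgroup.closure (T : Set G) = ⊤) →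
        (Nat.card G : ℝ) ^ c ≤ (Nat.card (G ⧸ commutator G) : ℝ) := by
  refine ⟨((∑ k ∈ Finset.range s, r ^ k : ℕ) + 1 : ℝ)⁻¹, by positivity, ?_⟩
  rintro G _ _ hs ⟨T, hTr, hT⟩
  have hgen : closure (Set.range ((↑) : T → G)) = ⊤ := by rwa [Subtype.range_coe]
  have ha : 1 ≤ (commutator G).index := Nat.pos_of_ne_zero (commutator G).index_ne_zero_of_finite
  have hcard : Nat.card G ≤ (commutator G).index ^ ∑ k ∈ Finset.range s, r ^ k :=
    calc Nat.card G = ((⊤ : Subgroup G).lowerCentralSeries s).index := by rw [hs, index_bot]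
      _ ≤ (commutator G).index ^ ∑ k ∈ Finset.range s, Fintype.card T ^ k :=
        index_lowerCentralSeries_le hgen s
      _ ≤ (commutator G).index ^ ∑ k ∈ Finset.range s, r ^ k := by
        rw [Fintype.card_coe]
        gcongr
  exact Real.rpow_inv_succ_le_of_le_pow (by positivity) (by exact_mod_cast ha)
    (by exact_mod_cast hcard)

/-- **Nilpotent groups of bounded rank have large abelianisations.**
For all `r, s ≥ 1` there is `c = c(r,s) > 0` such that every finite nilpotent group `G` of
class at most `s` generated by at most `r` elements satisfies `|G/[G,G]| ≥ |G|^c`. -/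
theorem stmt18 (r s : ℕ) (hr : 1 ≤ r) (hs : 1 ≤ s) :
    ∃ c : ℝ, 0 < c ∧
      ∀ (G : Type*) [Group G] [Fintype G],
        (⊤ : Subgroup G).lowerCentralSeries s = ⊥ →
        (∃ T : Finset G, T.card ≤ r ∧ Subgroup.closure (T : Set G) = ⊤) →
        (Nat.card G : ℝ) ^ c ≤ (Nat.card (G ⧸ commutator G) : ℝ) :=
  stmt18_general r s
end
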